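/- On the null-shell chart U of the Schwarzschild exterior of mass M, the vector fields R := (p_{r*}/Ω²)·∂_{r*} + ((r−3M)/r⁴)·ℓ²·∂_{p_{r*}} and L := g(r)·∂_r + p_{r*}·∂_{p_{r*}}, where g(r) := r(r−3M)(r+6M)/(27M²), satisfy the Lie bracket identity [R, L] = ((r−3M)(r+5M)/(9M²))·R at every point of U. -/

import Mathlib

open Real

noncomputable section

namespace SchwVlasov

/-- Points of the null-shell chart: coordinates `(t, r, θ, φ, p_{r*}, p_θ, p_φ)`. -/
abbrev Pt : Type := Fin 7 → ℝ

/-- The null-shell chart `U`: `r > 2M`, `θ ∈ (0, π)`, `p_θ² + p_φ²/sin²θ > 0`. -/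
def U (M : ℝ) : Set Pt :=
  {x | 2 * M < x 1 ∧ 0 < x 2 ∧ x 2 < Real.pi ∧
    0 < (x 5) ^ 2 + (x 6) ^ 2 / (Real.sin (x 2)) ^ 2}

/-- The Lie bracket `[V, W](x) = DW(x)·V(x) − DV(x)·W(x)` of vector fields on `ℝ⁷`. -/
def lieBracket (V W : Pt → Pt) (x : Pt) : Pt :=
  fderiv ℝ W x (V x) - fderiv ℝ V x (W x)

/-- `Ω²(r) = 1 − 2M/r`. -/
def Om2 (M : ℝ) (x : Pt) : ℝ := 1 - 2 * M / x 1

/-- `Ω(r) = (1 − 2M/r)^{1/2}`. -/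
def Om (M : ℝ) (x : Pt) : ℝ := Real.sqrt (Om2 M x)

/-- The total angular momentum `ℓ = (p_θ² + p_φ²/sin²θ)^{1/2}`. -/
def ell (x : Pt) : ℝ := Real.sqrt ((x 5) ^ 2 + (x 6) ^ 2 / (Real.sin (x 2)) ^ 2)

/-- `p_t = −(p_{r*}² + Ω²ℓ²/r²)^{1/2}`. -/
def ptm (M : ℝ) (x : Pt) : ℝ := -Real.sqrt ((x 4) ^ 2 + Om2 M x * (ell x) ^ 2 / (x 1) ^ 2)

/-- The coordinate vector field `∂_t`. -/
def dt : Pt := ![1, 0, 0, 0, 0, 0, 0]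
/-- The coordinate vector field `∂_r`. -/
def dr : Pt := ![0, 1, 0, 0, 0, 0, 0]
/-- The coordinate vector field `∂_θ`. -/
def dth : Pt := ![0, 0, 1, 0, 0, 0, 0]
/-- The coordinate vector field `∂_φ`. -/
def dph : Pt := ![0, 0, 0, 1, 0, 0, 0]
/-- The coordinate vector field `∂_{p_{r*}}`. -/
def dpr : Pt := ![0, 0, 0, 0, 1, 0, 0]
/-- The coordinate vector field `∂_{p_θ}`. -/
def dpth : Pt := ![0, 0, 0, 0, 0, 1, 0]

/-- The tortoise radial derivative `∂_{r*} = Ω²·∂_r`, viewed as a vector field. -/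
def drstar (M : ℝ) (x : Pt) : Pt := Om2 M x • dr

/-- The geodesic spray `𝕏_g`. -/
def Xg (M : ℝ) (x : Pt) : Pt :=
  (-(ptm M x) / Om2 M x) • dt + (x 4 / Om2 M x) • drstar M x
    + (x 5 / (x 1) ^ 2) • dth + (x 6 / ((x 1) ^ 2 * (Real.sin (x 2)) ^ 2)) • dph
    + ((x 1 - 3 * M) / (x 1) ^ 4 * (ell x) ^ 2) • dpr
    + (Real.cos (x 2) / ((x 1) ^ 2 * (Real.sin (x 2)) ^ 3) * (x 6) ^ 2) • dpth

/-- The radial part `R = (p_{r*}/Ω²)·∂_{r*} + ((r−3M)/r⁴)·ℓ²·∂_{p_{r*}}`. -/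
def Rvf (M : ℝ) (x : Pt) : Pt :=
  (x 4 / Om2 M x) • drstar M x + ((x 1 - 3 * M) / (x 1) ^ 4 * (ell x) ^ 2) • dpr

/-- `g(r) = r(r−3M)(r+6M)/(27M²)`. -/
def gfun (M rv : ℝ) : ℝ := rv * (rv - 3 * M) * (rv + 6 * M) / (27 * M ^ 2)

/-- The radial scaling vector field `L = g(r)·∂_r + p_{r*}·∂_{p_{r*}}`. -/
def Lvf (M : ℝ) (x : Pt) : Pt := gfun M (x 1) • dr + x 4 • dpr

/-!
Near a point of `U` we have `Ω² ≠ 0`, so `R = p_{r*} ∂_r + f(r) ℓ² ∂_{p_{r*}}` with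
`f(r) = (r - 3M)/r⁴`, while `L = g(r) ∂_r + p_{r*} ∂_{p_{r*}}`. Both fields have constant
directions `∂_r`, `∂_{p_{r*}}`, and `ℓ²` is constant along both, so
`[R, L] = (g' - 1) p_{r*} ∂_r + (f - f' g) ℓ² ∂_{p_{r*}}`, and for the cubic `g` one has
`g' - 1 = (r - 3M)(r + 5M)/(9M²)` and `f - f' g = (g' - 1) f`.
-/

end SchwVlasov

open Filter Topology

section Calculus

variable {𝕜 E F : Type*} [NontriviallyNormedField 𝕜] [NormedAddCommGroup E] [NormedSpace 𝕜 E]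
  [NormedAddCommGroup F] [NormedSpace 𝕜 F]

theorem fderiv_apply_eq_zero_of_forall_add_smul_eq {f : E → F} {x v : E}
    (hv : ∀ t : 𝕜, f (x + t • v) = f x) : fderiv 𝕜 f x v = 0 := by
  by_cases hf : DifferentiableAt 𝕜 f x
  · refine (hf.hasFDerivAt.hasLineDerivAt v).unique ?_
    simpa only [HasLineDerivAt, hv] using hasDerivAt_const (0 : 𝕜) (f x)
  · simp [fderiv_zero_of_not_differentiableAt hf]

theorem VectorField.lieBracket_smul_add_smul {a b c d : E → 𝕜} {a' b' c' d' : E →L[𝕜] 𝕜}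
    {u v x : E} (ha : HasFDerivAt a a' x) (hb : HasFDerivAt b b' x) (hc : HasFDerivAt c c' x)
    (hd : HasFDerivAt d d' x) :
    lieBracket 𝕜 (fun y ↦ a y • u + b y • v) (fun y ↦ c y • u + d y • v) x =
      (c' (a x • u + b x • v) - a' (c x • u + d x • v)) • u +
        (d' (a x • u + b x • v) - b' (c x • u + d x • v)) • v := by
  rw [lieBracket_eq]
  beta_reduce
  rw [((hc.smul_const u).fun_add (hd.smul_const v)).fderiv,
    ((ha.smul_const u).fun_add (hb.smul_const v)).fderiv]
  simp only [add_apply, ContinuousLinearMap.smulRight_apply]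
  module

end Calculus

namespace SchwVlasov

theorem lieBracket_eq_vectorField_lieBracket : lieBracket = VectorField.lieBracket ℝ := rfl

def ellSq (y : Pt) : ℝ := y 5 ^ 2 + y 6 ^ 2 / sin (y 2) ^ 2

theorem ell_sq (y : Pt) : ell y ^ 2 = ellSq y := Real.sq_sqrt (by positivity)

theorem differentiableAt_ellSq {x : Pt} (hx : sin (x 2) ≠ 0) : DifferentiableAt ℝ ellSq x := by
  unfold ellSq
  fun_prop (disch := exact pow_ne_zero 2 hx)

theorem fderiv_ellSq_dr (x : Pt) : fderiv ℝ ellSq x dr = 0 :=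
  fderiv_apply_eq_zero_of_forall_add_smul_eq fun t ↦ by simp [ellSq, dr]

theorem fderiv_ellSq_dpr (x : Pt) : fderiv ℝ ellSq x dpr = 0 :=
  fderiv_apply_eq_zero_of_forall_add_smul_eq fun t ↦ by simp [ellSq, dpr]

theorem Om2_ne_zero {M : ℝ} {y : Pt} (hy : y 1 ≠ 2 * M) : Om2 M y ≠ 0 := by
  rcases eq_or_ne (y 1) 0 with h | h
  · simp [Om2, h]
  · rw [Om2, sub_ne_zero, ne_comm, Ne, div_eq_one_iff_eq h]
    exact hy.symm

theorem Rvf_eventuallyEq {M : ℝ} {x : Pt} (hx : x 1 ≠ 2 * M) :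
    Rvf M =ᶠ[𝓝 x] fun y ↦ y 4 • dr + ((y 1 - 3 * M) / y 1 ^ 4 * ellSq y) • dpr := by
  filter_upwards [(continuous_apply 1).continuousAt.eventually_ne hx] with y hy
  simp only [Rvf, drstar, smul_smul, div_mul_cancel₀ _ (Om2_ne_zero hy), ell_sq]

theorem hasDerivAt_gfun (M r : ℝ) :
    HasDerivAt (gfun M) ((3 * r ^ 2 + 6 * M * r - 18 * M ^ 2) / (27 * M ^ 2)) r :=
  ((((hasDerivAt_id' r).fun_mul ((hasDerivAt_id' r).sub_const (3 * M))).fun_mul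
    ((hasDerivAt_id' r).add_const (6 * M))).div_const (27 * M ^ 2)).congr_deriv (by ring)

theorem hasDerivAt_sub_div_pow_four (a : ℝ) {r : ℝ} (hr : r ≠ 0) :
    HasDerivAt (fun r ↦ (r - a) / r ^ 4) ((4 * a - 3 * r) / r ^ 5) r := by
  refine (((hasDerivAt_id' r).sub_const a).fun_div (hasDerivAt_pow 4 r)
    (pow_ne_zero 4 hr)).congr_deriv ?_
  field_simp
  ring

/-- `[R, L] = ((r−3M)(r+5M)/(9M²))·R` on the null-shell chart. -/
theorem bracket_R_L (M : ℝ) (hM : 0 < M) (x : Pt) (hx : x ∈ U M) :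
    lieBracket (Rvf M) (Lvf M) x
      = ((x 1 - 3 * M) * (x 1 + 5 * M) / (9 * M ^ 2)) • Rvf M x := by
  obtain ⟨hr, hθ₀, hθπ, -⟩ := hx
  have hr₀ : x 1 ≠ 0 := by linarith
  have hR := Rvf_eventuallyEq hr.ne'
  have hp := hasFDerivAt_apply (𝕜 := ℝ) 4 x
  have h₁ := hasFDerivAt_apply (𝕜 := ℝ) 1 x
  have hf := (hasDerivAt_sub_div_pow_four (3 * M) hr₀).comp_hasFDerivAt x h₁
  have hg := (hasDerivAt_gfun M (x 1)).comp_hasFDerivAt x h₁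
  have hq := (differentiableAt_ellSq (sin_pos_of_pos_of_lt_pi hθ₀ hθπ).ne').hasFDerivAt
  rw [lieBracket_eq_vectorField_lieBracket, hR.lieBracket_vectorField_eq EventuallyEq.rfl,
    hR.eq_of_nhds]
  refine (VectorField.lieBracket_smul_add_smul hp (hf.fun_mul hq) hg hp).trans ?_
  simp only [map_add, map_smul, fderiv_ellSq_dr, fderiv_ellSq_dpr, add_apply, smul_apply,
    ContinuousLinearMap.proj_apply, Function.comp_apply, smul_eq_mul]
  match_scalars <;>
    simp only [dr, dpr, gfun, Matrix.cons_val, Matrix.cons_val_one, Matrix.cons_val_zero] <;>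
    field_simp <;> ring

end SchwVlasov
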